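/- Let b > 1, m > 0, n > 0 be real, q ≥ 0 an integer, a > 0 real, z_k := exp(−n(b−1)/(m·b^k)), t := b^{−q}/(b−1), and let p̃(w, β_1,…,β_q) := z_w^{1/(b−1)}·(1−z_w)·∏_{j=1}^q z_{w−j}^{1−β_j}·(1−z_{w−j})^{β_j}. Then (assuming all series converge absolutely) ∑_{w∈ℤ} ∑_{β_1,…,β_q∈{0,1}} p̃(w,β) · b^{−a·w} · ( 1/(b^a − 1) + ∑_{s=1}^{q} (1−β_s)·b^{a·s} ) = ∑_{w∈ℤ} b^{−a·w} · z_w^{1+t} = ((n(b−1)/m)^{−a}) · ∑_{w∈ℤ} (−ln z_w)^a · z_w^{1+t}. -/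

import Mathlib

open Real Finset

/-- z_k = exp(−n(b−1)/(m·b^k)). -/
noncomputable def zf (b m n : ℝ) (k : ℤ) : ℝ :=
  Real.exp (-(n * (b - 1)) / (m * b ^ k))

/-- The simplified register probability mass. -/
noncomputable def ptilde (b m n : ℝ) (q : ℕ) (w : ℤ) (β : Fin q → Fin 2) : ℝ :=
  zf b m n w ^ (1 / (b - 1)) * (1 - zf b m n w) *
    ∏ j : Fin q,
      zf b m n (w - ((j : ℕ) : ℤ) - 1) ^ (1 - (β j : ℕ)) *
        (1 - zf b m n (w - ((j : ℕ) : ℤ) - 1)) ^ ((β j : ℕ))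

/-- The (unnormalized) GRA register contribution
b^{−a·w}·(1/(b^a − 1) + ∑_{s=1}^q (1−β_s)·b^{a·s}). -/
noncomputable def graContrib (b a : ℝ) (q : ℕ) (w : ℤ) (β : Fin q → Fin 2) : ℝ :=
  b ^ (-(a * (w : ℝ))) *
    (1 / (b ^ a - 1) +
      ∑ s : Fin q, (1 - ((β s : ℕ) : ℝ)) * b ^ (a * (((s : ℕ) : ℝ) + 1)))

noncomputable def gg (b m n a e : ℝ) (w : ℤ) : ℝ :=
  b ^ (-(a * (w : ℝ))) * zf b m n w ^ e

lemma zf_pos (b m n : ℝ) (k : ℤ) : 0 < zf b m n k := Real.exp_pos _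

lemma zf_lt_one {b m n : ℝ} (hb : 1 < b) (hm : 0 < m) (hn : 0 < n) (k : ℤ) :
    zf b m n k < 1 := by
  have hb0 : (0:ℝ) < b := lt_trans one_pos hb
  have hd : 0 < m * b ^ k := mul_pos hm (zpow_pos hb0 k)
  have : -(n * (b - 1)) / (m * b ^ k) < 0 := div_neg_of_neg_of_pos (by nlinarith) hd
  calc zf b m n k < Real.exp 0 := Real.exp_lt_exp.mpr this
    _ = 1 := Real.exp_zero

lemma zf_sub_one {b m n : ℝ} (hb : 1 < b) (hm : 0 < m) (k : ℤ) :
    zf b m n (k - 1) = zf b m n k ^ (b : ℝ) := by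
  have hb0 : (0:ℝ) < b := lt_trans one_pos hb
  rw [zf, zf, ← Real.exp_mul]
  congr 1
  rw [zpow_sub_one₀ (ne_of_gt hb0)]
  have h1 : (b:ℝ) ^ k ≠ 0 := ne_of_gt (zpow_pos hb0 k)
  field_simp

lemma zf_sub_nat {b m n : ℝ} (hb : 1 < b) (hm : 0 < m) (k : ℤ) (s : ℕ) :
    zf b m n (k - (s+1 : ℕ)) = zf b m n k ^ (b ^ ((s:ℝ)+1)) := by
  have hb0 : (0:ℝ) < b := lt_trans one_pos hb
  induction s with
  | zero => simp [zf_sub_one hb hm]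
  | succ s ih =>
      have : (k - (s+1+1 : ℕ) : ℤ) = (k - (s+1:ℕ)) - 1 := by push_cast; ring
      rw [this, zf_sub_one hb hm, ih, ← Real.rpow_mul (zf_pos b m n k).le]
      congr 1
      push_cast
      rw [Real.rpow_add hb0, Real.rpow_add hb0, Real.rpow_add hb0, Real.rpow_one]

lemma gg_shift {b m n a : ℝ} (hb : 1 < b) (hm : 0 < m) (e : ℝ) (w : ℤ) :
    gg b m n a (b * e) w = b ^ (-a) * gg b m n a e (w - 1) := by
  have hb0 : (0:ℝ) < b := lt_trans one_pos hb
  have h1 : zf b m n (w - 1) ^ e = zf b m n w ^ (b * e) := by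
    rw [zf_sub_one hb hm, ← Real.rpow_mul (zf_pos b m n w).le]
  rw [gg, gg, h1, ← mul_assoc, ← Real.rpow_add hb0]
  congr 2
  push_cast
  ring

lemma tsum_gg_shift {b m n a : ℝ} (hb : 1 < b) (hm : 0 < m) (e : ℝ) :
    ∑' w : ℤ, gg b m n a (b * e) w = b ^ (-a) * ∑' w : ℤ, gg b m n a e w := by
  calc ∑' w : ℤ, gg b m n a (b * e) w
      = ∑' w : ℤ, b ^ (-a) * gg b m n a e (w - 1) :=
        tsum_congr fun w => gg_shift hb hm e w
    _ = b ^ (-a) * ∑' w : ℤ, gg b m n a e (w - 1) := tsum_mul_left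
    _ = b ^ (-a) * ∑' w : ℤ, gg b m n a e w := by
        congr 1
        have h := (Equiv.subRight (1:ℤ)).tsum_eq (gg b m n a e)
        simp only [Equiv.subRight_apply] at h
        exact h

lemma summable_gg_shift {b m n a : ℝ} (hb : 1 < b) (hm : 0 < m) (e : ℝ) :
    Summable (gg b m n a (b * e)) ↔ Summable (gg b m n a e) := by
  have hb0 : (0:ℝ) < b := lt_trans one_pos hb
  have hne : b ^ (-a) ≠ 0 := ne_of_gt (Real.rpow_pos_of_pos hb0 _)
  have h : gg b m n a (b * e) = fun w => b ^ (-a) * gg b m n a e (w - 1) := by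
    funext w; exact gg_shift hb hm e w
  rw [h, summable_mul_left_iff hne]
  have h2 := (Equiv.subRight (1:ℤ)).summable_iff (f := gg b m n a e)
  simp only [Function.comp_def, Equiv.subRight_apply] at h2
  exact h2

lemma tsum_gg_pow_shift {b m n a : ℝ} (hb : 1 < b) (hm : 0 < m) (e : ℝ) (s : ℕ) :
    ∑' w : ℤ, gg b m n a (b ^ (s:ℝ) * e) w
      = b ^ (-(a*(s:ℝ))) * ∑' w : ℤ, gg b m n a e w := by
  have hb0 : (0:ℝ) < b := lt_trans one_pos hb
  induction s with
  | zero => simp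
  | succ s ih =>
      have h1 : b ^ ((s+1:ℕ):ℝ) * e = b * (b ^ (s:ℝ) * e) := by
        push_cast
        rw [Real.rpow_add hb0, Real.rpow_one]
        ring
      rw [h1, tsum_gg_shift hb hm, ih, ← mul_assoc, ← Real.rpow_add hb0]
      congr 2
      push_cast
      ring

lemma gg_nonneg {b m n a : ℝ} (hb : 1 < b) (e : ℝ) (w : ℤ) : 0 ≤ gg b m n a e w :=
  mul_nonneg (Real.rpow_nonneg (le_of_lt (lt_trans one_pos hb)) _)
    (Real.rpow_nonneg (zf_pos b m n w).le _)

lemma summable_gg_of_le {b m n a e0 : ℝ} (hb : 1 < b) (hm : 0 < m) (hn : 0 < n)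
    (hM : Summable (gg b m n a e0)) {e : ℝ} (he : e0 ≤ e) :
    Summable (gg b m n a e) := by
  apply hM.of_nonneg_of_le (fun w => gg_nonneg hb e w)
  intro w
  apply mul_le_mul_of_nonneg_left _ (Real.rpow_nonneg (le_of_lt (lt_trans one_pos hb)) _)
  exact Real.rpow_le_rpow_of_exponent_ge (zf_pos b m n w) (zf_lt_one hb hm hn w).le he

lemma sum_prod_one (q : ℕ) (f : Fin q → Fin 2 → ℝ) (hf : ∀ j, f j 0 + f j 1 = 1) :
    ∑ β : Fin q → Fin 2, ∏ j, f j (β j) = 1 := by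
  have h := Finset.prod_univ_sum (fun _ : Fin q => (Finset.univ : Finset (Fin 2))) f
  rw [Fintype.piFinset_univ] at h
  rw [← h]
  rw [Finset.prod_congr rfl (fun j _ => by rw [Fin.sum_univ_two, hf j])]
  exact Finset.prod_const_one

lemma sum_prod_pick (q : ℕ) (f : Fin q → Fin 2 → ℝ) (hf : ∀ j, f j 0 + f j 1 = 1)
    (s : Fin q) :
    ∑ β : Fin q → Fin 2, (1 - ((β s : ℕ) : ℝ)) * ∏ j, f j (β j) = f s 0 := by
  have h1 : ∀ β : Fin q → Fin 2, (1 - ((β s : ℕ):ℝ)) * ∏ j, f j (β j)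
      = ∏ j, (if s = j then (1 - ((β j : ℕ):ℝ)) else 1) * f j (β j) := by
    intro β
    rw [Finset.prod_mul_distrib, Finset.prod_ite_eq]
    simp
  rw [Finset.sum_congr rfl (fun β _ => h1 β)]
  have h := Finset.prod_univ_sum (fun _ : Fin q => (Finset.univ : Finset (Fin 2)))
    (fun j v => (if s = j then (1 - ((v : ℕ):ℝ)) else 1) * f j v)
  rw [Fintype.piFinset_univ] at h
  rw [← h]
  have h2 : ∀ j : Fin q,
      (∑ v : Fin 2, (if s = j then (1 - ((v : ℕ):ℝ)) else 1) * f j v)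
        = if s = j then f j 0 else 1 := by
    intro j
    rw [Fin.sum_univ_two]
    by_cases hsj : s = j
    · simp [hsj]
    · simp [hsj, hf j]
  rw [Finset.prod_congr rfl (fun j _ => h2 j), Finset.prod_ite_eq]
  simp

lemma step1 (b m n a : ℝ) (q : ℕ) (w : ℤ) :
    ∑ β : Fin q → Fin 2, ptilde b m n q w β * graContrib b a q w β
      = b ^ (-(a * (w:ℝ))) * (zf b m n w ^ (1/(b-1)) * (1 - zf b m n w)) *
        (1/(b^a-1) +
          ∑ j ∈ Finset.range q, b^(a*((j:ℝ)+1)) * zf b m n (w - (j:ℤ) - 1)) := by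
  set A := zf b m n w ^ (1/(b-1)) * (1 - zf b m n w) with hA
  set B := b ^ (-(a * (w:ℝ))) with hB
  set f : Fin q → Fin 2 → ℝ := fun j v =>
    zf b m n (w - ((j:ℕ):ℤ) - 1) ^ (1 - (v:ℕ)) *
      (1 - zf b m n (w - ((j:ℕ):ℤ) - 1)) ^ ((v:ℕ)) with hf
  have hf1 : ∀ j, f j 0 + f j 1 = 1 := by intro j; simp [hf]
  have hkey : ∀ β : Fin q → Fin 2, ptilde b m n q w β * graContrib b a q w β
      = B * A * (1/(b^a-1)) * (∏ j, f j (β j))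
        + ∑ s : Fin q, B * A * b^(a*(((s:ℕ):ℝ)+1)) *
            ((1 - ((β s : ℕ):ℝ)) * ∏ j, f j (β j)) := by
    intro β
    have hp : ptilde b m n q w β = A * ∏ j, f j (β j) := rfl
    have hg : graContrib b a q w β
        = B * (1/(b^a-1) + ∑ s : Fin q, (1 - ((β s : ℕ):ℝ)) * b^(a*(((s:ℕ):ℝ)+1))) := rfl
    rw [hp, hg, mul_add, Finset.mul_sum]
    rw [mul_add, Finset.mul_sum]
    congr 1
    · ring
    · exact Finset.sum_congr rfl (fun s _ => by ring)
  rw [Finset.sum_congr rfl (fun β _ => hkey β), Finset.sum_add_distrib]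
  rw [Finset.sum_comm]
  rw [← Finset.mul_sum, sum_prod_one q f hf1]
  have h3 : ∀ s : Fin q,
      (∑ β : Fin q → Fin 2, B * A * b^(a*(((s:ℕ):ℝ)+1)) *
          ((1 - ((β s : ℕ):ℝ)) * ∏ j, f j (β j)))
        = B * A * (b^(a*(((s:ℕ):ℝ)+1)) * zf b m n (w - ((s:ℕ):ℤ) - 1)) := by
    intro s
    rw [← Finset.mul_sum, sum_prod_pick q f hf1 s]
    have : f s 0 = zf b m n (w - ((s:ℕ):ℤ) - 1) := by simp [hf]
    rw [this]
    ring
  rw [Finset.sum_congr rfl (fun s _ => h3 s), ← Finset.mul_sum]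
  rw [mul_add]
  congr 1
  · ring
  · congr 1
    exact (Fin.sum_univ_eq_sum_range
      (fun j => b^(a*((j:ℝ)+1)) * zf b m n (w - (j:ℤ) - 1)) q)

lemma Fw_eq {b m n : ℝ} (a : ℝ) (hb : 1 < b) (hm : 0 < m) (q : ℕ) (w : ℤ) :
    b ^ (-(a * (w:ℝ))) * (zf b m n w ^ (1/(b-1)) * (1 - zf b m n w)) *
      (1/(b^a-1) +
        ∑ j ∈ Finset.range q, b^(a*((j:ℝ)+1)) * zf b m n (w - (j:ℤ) - 1))
    = (1/(b^a-1)) * (gg b m n a (1/(b-1)) w - gg b m n a (b * (1/(b-1))) w)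
      + ∑ j ∈ Finset.range q, b^(a*((j:ℝ)+1)) *
          (gg b m n a (b^((j:ℝ)+1) * (1 + b^(-((j:ℝ)+1)) * (1/(b-1)))) w
            - gg b m n a (b^((j:ℝ)+1) * (1 + b^(-(j:ℝ)) * (1/(b-1)))) w) := by
  have hb0 : (0:ℝ) < b := lt_trans one_pos hb
  have hb1 : b - 1 ≠ 0 := sub_ne_zero.mpr (ne_of_gt hb)
  have hz : (0:ℝ) < zf b m n w := zf_pos b m n w
  have hbu : b * (1/(b-1)) = 1/(b-1) + 1 := by field_simp; ring
  have hzf : ∀ j : ℕ, zf b m n (w - (j:ℤ) - 1) = zf b m n w ^ ((b:ℝ) ^ ((j:ℝ)+1)) := by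
    intro j
    have h : (w - (j:ℤ) - 1) = w - ((j+1:ℕ):ℤ) := by push_cast; ring
    rw [h, zf_sub_nat hb hm]
  have g2 : gg b m n a (b * (1/(b-1))) w
      = b ^ (-(a * (w:ℝ))) * (zf b m n w ^ (1/(b-1)) * zf b m n w) := by
    rw [gg, hbu, Real.rpow_add hz, Real.rpow_one]
  have g3 : ∀ j : ℕ, gg b m n a ((b:ℝ)^((j:ℝ)+1) * (1 + b^(-((j:ℝ)+1)) * (1/(b-1)))) w
      = b ^ (-(a * (w:ℝ))) *
          (zf b m n w ^ ((b:ℝ)^((j:ℝ)+1)) * zf b m n w ^ (1/(b-1))) := by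
    intro j
    have hE : (b:ℝ)^((j:ℝ)+1) * (1 + b^(-((j:ℝ)+1)) * (1/(b-1)))
        = (b:ℝ)^((j:ℝ)+1) + 1/(b-1) := by
      rw [mul_add, mul_one, ← mul_assoc, ← Real.rpow_add hb0]
      rw [show (j:ℝ)+1 + -((j:ℝ)+1) = 0 by ring, Real.rpow_zero, one_mul]
    rw [gg, hE, Real.rpow_add hz]
  have g4 : ∀ j : ℕ, gg b m n a ((b:ℝ)^((j:ℝ)+1) * (1 + b^(-(j:ℝ)) * (1/(b-1)))) w
      = b ^ (-(a * (w:ℝ))) *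
          (zf b m n w ^ ((b:ℝ)^((j:ℝ)+1)) * zf b m n w ^ (1/(b-1)) * zf b m n w) := by
    intro j
    have hE : (b:ℝ)^((j:ℝ)+1) * (1 + b^(-(j:ℝ)) * (1/(b-1)))
        = (b:ℝ)^((j:ℝ)+1) + (1/(b-1) + 1) := by
      rw [mul_add, mul_one, ← mul_assoc, ← Real.rpow_add hb0, ← hbu]
      rw [show (j:ℝ)+1 + -(j:ℝ) = 1 by ring, Real.rpow_one]
    rw [gg, hE, Real.rpow_add hz, Real.rpow_add hz, Real.rpow_one]
    ring
  simp only [hzf, g2, g3, g4]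
  rw [show gg b m n a (1/(b-1)) w
    = b ^ (-(a * (w:ℝ))) * zf b m n w ^ (1/(b-1)) from rfl]
  rw [mul_add, Finset.mul_sum]
  congr 1
  · ring
  · exact Finset.sum_congr rfl (fun j _ => by ring)

/-- the exact expectation identity for the GRA register contribution. -/
theorem gra_expectation_identity (b m n t a : ℝ) (hb : 1 < b) (hm : 0 < m) (hn : 0 < n)
    (ha : 0 < a) (q : ℕ) (ht : t = b ^ (-(q : ℤ)) / (b - 1))
    (hL : Summable fun w : ℤ =>
      ∑ β : Fin q → Fin 2, |ptilde b m n q w β * graContrib b a q w β|)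
    (hM : Summable fun w : ℤ => |b ^ (-(a * (w : ℝ))) * zf b m n w ^ (1 + t)|)
    (hR : Summable fun w : ℤ => |(-Real.log (zf b m n w)) ^ a * zf b m n w ^ (1 + t)|) :
    ((∑' w : ℤ, ∑ β : Fin q → Fin 2, ptilde b m n q w β * graContrib b a q w β)
      = ∑' w : ℤ, b ^ (-(a * (w : ℝ))) * zf b m n w ^ (1 + t)) ∧
    ((∑' w : ℤ, b ^ (-(a * (w : ℝ))) * zf b m n w ^ (1 + t))
      = (n * (b - 1) / m) ^ (-a) *
          ∑' w : ℤ, (-Real.log (zf b m n w)) ^ a * zf b m n w ^ (1 + t)) := by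
  have hb0 : (0:ℝ) < b := lt_trans one_pos hb
  have hb1 : (0:ℝ) < b - 1 := by linarith
  have hba1 : (1:ℝ) < b ^ a := (Real.one_lt_rpow_iff_of_pos hb0).mpr (Or.inl ⟨hb, ha⟩)
  have hbane : b ^ a - 1 ≠ 0 := ne_of_gt (by linarith)
  have hbma : b ^ a * b ^ (-a) = 1 := by
    rw [← Real.rpow_add hb0]; norm_num
  have htq : t = b ^ (-(q:ℝ)) * (1/(b-1)) := by
    rw [ht, ← Real.rpow_intCast b (-(q:ℤ))]
    push_cast
    ring
  have htu : t ≤ 1/(b-1) := by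
    rw [htq]
    have h1 : b ^ (-(q:ℝ)) ≤ 1 :=
      Real.rpow_le_one_of_one_le_of_nonpos hb.le (neg_nonpos.mpr (Nat.cast_nonneg q))
    have h2 : (0:ℝ) < 1/(b-1) := by positivity
    nlinarith
  have hM' : Summable (gg b m n a (1+t)) := Summable.of_abs hM
  have hsum_of_le : ∀ {e : ℝ}, 1 + t ≤ e → Summable (gg b m n a e) :=
    fun he => summable_gg_of_le hb hm hn hM' he
  have hbu : b * (1/(b-1)) = 1/(b-1) + 1 := by field_simp; ring
  have hSu1 : Summable (gg b m n a (b * (1/(b-1)))) := by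
    apply hsum_of_le; rw [hbu]; linarith
  have hSu : Summable (gg b m n a (1/(b-1))) := (summable_gg_shift hb hm _).mp hSu1
  have hE1 : ∀ j:ℕ, (b:ℝ)^((j:ℝ)+1) * (1 + b^(-((j:ℝ)+1)) * (1/(b-1)))
      = b^((j:ℝ)+1) + 1/(b-1) := by
    intro j
    rw [mul_add, mul_one, ← mul_assoc, ← Real.rpow_add hb0]
    rw [show (j:ℝ)+1 + -((j:ℝ)+1) = 0 by ring, Real.rpow_zero, one_mul]
  have hE2 : ∀ j:ℕ, (b:ℝ)^((j:ℝ)+1) * (1 + b^(-(j:ℝ)) * (1/(b-1)))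
      = b^((j:ℝ)+1) + (1/(b-1) + 1) := by
    intro j
    rw [mul_add, mul_one, ← mul_assoc, ← Real.rpow_add hb0, ← hbu]
    rw [show (j:ℝ)+1 + -(j:ℝ) = 1 by ring, Real.rpow_one]
  have hone_le : ∀ j:ℕ, (1:ℝ) ≤ b^((j:ℝ)+1) :=
    fun j => Real.one_le_rpow hb.le (by positivity)
  have hSe1 : ∀ j:ℕ,
      Summable (gg b m n a ((b:ℝ)^((j:ℝ)+1) * (1 + b^(-((j:ℝ)+1)) * (1/(b-1))))) := by
    intro j
    apply hsum_of_le
    rw [hE1 j]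
    have := hone_le j
    linarith
  have hSe2 : ∀ j:ℕ,
      Summable (gg b m n a ((b:ℝ)^((j:ℝ)+1) * (1 + b^(-(j:ℝ)) * (1/(b-1))))) := by
    intro j
    apply hsum_of_le
    rw [hE2 j]
    have := hone_le j
    linarith
  constructor
  · -- part 1
    set T : ℕ → ℝ := fun s => ∑' w : ℤ, gg b m n a (1 + b^(-(s:ℝ)) * (1/(b-1))) w with hT
    have hstep : (∑' w : ℤ, ∑ β : Fin q → Fin 2, ptilde b m n q w β * graContrib b a q w β)
        = ∑' w : ℤ,
            ((1/(b^a-1)) * (gg b m n a (1/(b-1)) w - gg b m n a (b * (1/(b-1))) w)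
              + ∑ j ∈ Finset.range q, b^(a*((j:ℝ)+1)) *
                  (gg b m n a ((b:ℝ)^((j:ℝ)+1) * (1 + b^(-((j:ℝ)+1)) * (1/(b-1)))) w
                    - gg b m n a ((b:ℝ)^((j:ℝ)+1) * (1 + b^(-(j:ℝ)) * (1/(b-1)))) w)) :=
      tsum_congr fun w => by rw [step1 b m n a q w, Fw_eq a hb hm q w]
    rw [hstep]
    have hA : Summable (fun w : ℤ =>
        (1/(b^a-1)) * (gg b m n a (1/(b-1)) w - gg b m n a (b * (1/(b-1))) w)) :=
      (hSu.sub hSu1).mul_left _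
    have hB : ∀ j ∈ Finset.range q, Summable (fun w : ℤ => b^(a*((j:ℝ)+1)) *
        (gg b m n a ((b:ℝ)^((j:ℝ)+1) * (1 + b^(-((j:ℝ)+1)) * (1/(b-1)))) w
          - gg b m n a ((b:ℝ)^((j:ℝ)+1) * (1 + b^(-(j:ℝ)) * (1/(b-1)))) w)) :=
      fun j _ => ((hSe1 j).sub (hSe2 j)).mul_left _
    rw [Summable.tsum_add hA (summable_sum hB), tsum_mul_left, Summable.tsum_sub hSu hSu1, Summable.tsum_finsetSum hB]
    have hGshift : ∑' w:ℤ, gg b m n a (b*(1/(b-1))) w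
        = b^(-a) * ∑' w:ℤ, gg b m n a (1/(b-1)) w := tsum_gg_shift hb hm _
    have hfirst : (1/(b^a-1)) *
        ((∑' w:ℤ, gg b m n a (1/(b-1)) w) - ∑' w:ℤ, gg b m n a (b*(1/(b-1))) w)
        = ∑' w:ℤ, gg b m n a (b*(1/(b-1))) w := by
      rw [hGshift]
      set X := ∑' w:ℤ, gg b m n a (1/(b-1)) w
      have h1 : X - b^(-a)*X = (b^a - 1) * (b^(-a) * X) := by
        have h2 : (b^a - 1) * (b^(-a) * X) = b^a * b^(-a) * X - b^(-a) * X := by ring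
        rw [h2, hbma, one_mul]
      rw [h1, one_div, inv_mul_cancel_left₀ hbane]
    rw [hfirst]
    have hterm : ∀ j ∈ Finset.range q,
        (∑' w:ℤ, b^(a*((j:ℝ)+1)) *
          (gg b m n a ((b:ℝ)^((j:ℝ)+1) * (1 + b^(-((j:ℝ)+1)) * (1/(b-1)))) w
            - gg b m n a ((b:ℝ)^((j:ℝ)+1) * (1 + b^(-(j:ℝ)) * (1/(b-1)))) w))
        = T (j+1) - T j := by
      intro j _
      rw [tsum_mul_left, Summable.tsum_sub (hSe1 j) (hSe2 j)]
      have h1 := tsum_gg_pow_shift (n := n) (a := a) hb hm (1 + b^(-((j:ℝ)+1)) * (1/(b-1))) (j+1)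
      have h2 := tsum_gg_pow_shift (n := n) (a := a) hb hm (1 + b^(-(j:ℝ)) * (1/(b-1))) (j+1)
      push_cast at h1 h2
      rw [h1, h2]
      have hT1 : T (j+1) = ∑' w:ℤ, gg b m n a (1 + b^(-((j:ℝ)+1)) * (1/(b-1))) w := by
        rw [hT]; push_cast; ring_nf
      have hT2 : T j = ∑' w:ℤ, gg b m n a (1 + b^(-(j:ℝ)) * (1/(b-1))) w := rfl
      rw [hT1, hT2]
      have hinv : b^(a*((j:ℝ)+1)) * b^(-(a*((j:ℝ)+1))) = 1 := by
        rw [← Real.rpow_add hb0]; norm_num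
      set Y1 := ∑' w:ℤ, gg b m n a (1 + b^(-((j:ℝ)+1)) * (1/(b-1))) w
      set Y2 := ∑' w:ℤ, gg b m n a (1 + b^(-(j:ℝ)) * (1/(b-1))) w
      calc b^(a*((j:ℝ)+1)) * (b^(-(a*((j:ℝ)+1))) * Y1 - b^(-(a*((j:ℝ)+1))) * Y2)
          = (b^(a*((j:ℝ)+1)) * b^(-(a*((j:ℝ)+1)))) * Y1
            - (b^(a*((j:ℝ)+1)) * b^(-(a*((j:ℝ)+1)))) * Y2 := by ring
        _ = Y1 - Y2 := by rw [hinv, one_mul, one_mul]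
    rw [Finset.sum_congr rfl hterm, Finset.sum_range_sub T q]
    have hT0 : T 0 = ∑' w:ℤ, gg b m n a (b*(1/(b-1))) w := by
      have he : (1:ℝ) + b^(-((0:ℕ):ℝ)) * (1/(b-1)) = b * (1/(b-1)) := by
        rw [hbu]
        norm_num
        ring
      show (∑' w:ℤ, gg b m n a (1 + b^(-((0:ℕ):ℝ)) * (1/(b-1))) w) = _
      rw [he]
    have hTq : T q = ∑' w:ℤ, gg b m n a (1+t) w := by
      show (∑' w:ℤ, gg b m n a (1 + b^(-((q:ℕ):ℝ)) * (1/(b-1))) w) = _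
      rw [htq]
    have hfin : ∑' w : ℤ, b ^ (-(a * (w : ℝ))) * zf b m n w ^ (1 + t)
        = ∑' w:ℤ, gg b m n a (1+t) w := rfl
    rw [hfin, hT0, hTq]
    ring
  · -- part 2
    have hc : (0:ℝ) < n * (b-1) / m := by positivity
    rw [← tsum_mul_left]
    apply tsum_congr
    intro w
    have hzw : (0:ℝ) < b ^ w := zpow_pos hb0 w
    have hlog : -Real.log (zf b m n w) = (n * (b-1) / m) * b ^ (-(w:ℝ)) := by
      rw [zf, Real.log_exp, Real.rpow_neg hb0.le, Real.rpow_intCast]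
      have h1 : (b:ℝ) ^ w ≠ 0 := hzw.ne'
      have h2 : m ≠ 0 := hm.ne'
      field_simp
    have h1 : (n*(b-1)/m)^(-a) * (n*(b-1)/m)^a = 1 := by
      rw [← Real.rpow_add hc]
      norm_num
    rw [hlog, Real.mul_rpow hc.le (Real.rpow_nonneg hb0.le _), ← Real.rpow_mul hb0.le,
      show -(w:ℝ)*a = -(a*(w:ℝ)) by ring]
    linear_combination (-(b ^ (-(a * (w:ℝ))) * zf b m n w ^ (1 + t))) * h1
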